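/- If the class of Ding injective right R-modules is closed under arbitrary direct sums, then R is right Noetherian. -/

import Mathlib

/-! Preamble: basic notions of relative homological algebra over a
(possibly noncommutative) ring.  Right `R`-modules are modeled as
(left) modules over the opposite ring `Rᵐᵒᵖ`. -/

open CategoryTheory Opposite

noncomputable section

/-- The Ext group `Ext^n(A, B)` in the category of left `S`-modules,
computed as a derived functor (of `ℤ`-modules). -/
def extGroup (S : Type) [Ring S] (n : ℕ) (A B : ModuleCat.{0} S) : Type :=
  ((_root_.Ext ℤ (ModuleCat.{0} S) n).obj (op A)).obj B

/-- Vanishing of the Ext group `Ext^n(A, B)`. -/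
def extVanish (S : Type) [Ring S] (n : ℕ) (A B : ModuleCat.{0} S) : Prop :=
  Subsingleton (extGroup S n A B)

/-- A module `E` is FP-injective if `Ext¹(F, E) = 0` for every finitely
presented module `F`. -/
def FPInjective (S : Type) [Ring S] (E : ModuleCat.{0} S) : Prop :=
  ∀ F : ModuleCat.{0} S, Module.FinitePresentation S F → extVanish S 1 F E

/-- `E` satisfies the Ext-criterion for FP-injective dimension `≤ n`:
`Ext^{n+1}(F, E) = 0` for every finitely presented `F`. -/
def fpInjDimLE (S : Type) [Ring S] (E : ModuleCat.{0} S) (n : ℕ) : Prop :=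
  ∀ F : ModuleCat.{0} S, Module.FinitePresentation S F → extVanish S (n + 1) F E

/-- `E` has FP-injective dimension exactly `n` : `n` is the least natural number
with `Ext^{n+1}(F, E) = 0` for all finitely presented `F`. -/
def fpInjDimEq (S : Type) [Ring S] (E : ModuleCat.{0} S) (n : ℕ) : Prop :=
  fpInjDimLE S E n ∧ ∀ m : ℕ, fpInjDimLE S E m → n ≤ m

/-- `E` has finite FP-injective dimension. -/
def fpInjDimFinite (S : Type) [Ring S] (E : ModuleCat.{0} S) : Prop :=
  ∃ n : ℕ, fpInjDimLE S E n

/-- A ring `S` is left coherent if every finitely generated left ideal is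
finitely presented (as a left `S`-module). -/
def LeftCoherent (S : Type) [Ring S] : Prop :=
  ∀ I : Submodule S S, I.FG → Module.FinitePresentation S I

/-- A ring `S` is right coherent if its opposite ring is left coherent. -/
def RightCoherent (S : Type) [Ring S] : Prop :=
  LeftCoherent Sᵐᵒᵖ

section BTensor

variable (R : Type) [Ring R]

/-- The subgroup of `A ⊗_ℤ B` by which one quotients to obtain the balanced
tensor product `A ⊗_R B` of a right `R`-module `A` and a left `R`-module `B`. -/
def btRel (A : Type) [AddCommGroup A] [Module Rᵐᵒᵖ A]
    (B : Type) [AddCommGroup B] [Module R B] :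
    Submodule ℤ (TensorProduct ℤ A B) :=
  Submodule.span ℤ
    {x | ∃ (a : A) (r : R) (b : B),
      x = (MulOpposite.op r • a) ⊗ₜ[ℤ] b - a ⊗ₜ[ℤ] (r • b)}

/-- The balanced tensor product `A ⊗_R B` of a right `R`-module `A` and a left
`R`-module `B`, defined as a quotient of `A ⊗_ℤ B`. -/
abbrev BTensor (A : Type) [AddCommGroup A] [Module Rᵐᵒᵖ A]
    (B : Type) [AddCommGroup B] [Module R B] : Type :=
  TensorProduct ℤ A B ⧸ btRel R A B

variable {A A' : Type} [AddCommGroup A] [Module Rᵐᵒᵖ A] [AddCommGroup A'] [Module Rᵐᵒᵖ A']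
variable {B B' : Type} [AddCommGroup B] [Module R B] [AddCommGroup B'] [Module R B']

/-- The map `A ⊗_R B → A ⊗_R B'` induced by a map `f : B → B'` of left
`R`-modules. -/
def BTensor.lmap (f : B →ₗ[R] B') (A : Type) [AddCommGroup A] [Module Rᵐᵒᵖ A] :
    BTensor R A B →ₗ[ℤ] BTensor R A B' :=
  Submodule.mapQ (btRel R A B) (btRel R A B')
    (TensorProduct.map LinearMap.id f.toAddMonoidHom.toIntLinearMap)
    (by
      rw [btRel, Submodule.span_le]
      rintro x ⟨a, r, b, rfl⟩
      simp only [SetLike.mem_coe, Submodule.mem_comap, map_sub, TensorProduct.map_tmul,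
        LinearMap.id_apply, AddMonoidHom.coe_toIntLinearMap, LinearMap.toAddMonoidHom_coe,
        map_smul]
      have key : (TensorProduct.map LinearMap.id f.toAddMonoidHom.toIntLinearMap)
          ((MulOpposite.op r • a) ⊗ₜ[ℤ] b - a ⊗ₜ[ℤ] (r • b)) =
            (MulOpposite.op r • a) ⊗ₜ[ℤ] f b - a ⊗ₜ[ℤ] (r • f b) := by simp
      exact Submodule.subset_span ⟨a, r, f b, key⟩)

/-- The map `A ⊗_R B → A' ⊗_R B` induced by a map `g : A → A'` of right
`R`-modules. -/
def BTensor.rmap (g : A →ₗ[Rᵐᵒᵖ] A') (B : Type) [AddCommGroup B] [Module R B] :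
    BTensor R A B →ₗ[ℤ] BTensor R A' B :=
  Submodule.mapQ (btRel R A B) (btRel R A' B)
    (TensorProduct.map g.toAddMonoidHom.toIntLinearMap LinearMap.id)
    (by
      rw [btRel, Submodule.span_le]
      rintro x ⟨a, r, b, rfl⟩
      simp only [SetLike.mem_coe, Submodule.mem_comap, map_sub, TensorProduct.map_tmul,
        LinearMap.id_apply, AddMonoidHom.coe_toIntLinearMap, LinearMap.toAddMonoidHom_coe,
        map_smul]
      have key : (TensorProduct.map g.toAddMonoidHom.toIntLinearMap LinearMap.id)
          ((MulOpposite.op r • a) ⊗ₜ[ℤ] b - a ⊗ₜ[ℤ] (r • b)) =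
            (MulOpposite.op r • g a) ⊗ₜ[ℤ] b - g a ⊗ₜ[ℤ] (r • b) := by simp
      exact Submodule.subset_span ⟨g a, r, b, key⟩)

/-- A right `R`-module `A` is flat if the functor `A ⊗_R —` preserves
injectivity of maps of left `R`-modules. -/
def FlatRight (A : ModuleCat.{0} Rᵐᵒᵖ) : Prop :=
  ∀ (B B' : ModuleCat.{0} R) (f : B →ₗ[R] B'),
    Function.Injective f → Function.Injective (BTensor.lmap R f A)

/-- A left `R`-module `B` is flat if the functor `— ⊗_R B` preserves
injectivity of maps of right `R`-modules. -/
def FlatLeft (B : ModuleCat.{0} R) : Prop :=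
  ∀ (A A' : ModuleCat.{0} Rᵐᵒᵖ) (g : A →ₗ[Rᵐᵒᵖ] A'),
    Function.Injective g → Function.Injective (BTensor.rmap R g B)

end BTensor

/-- A module `N` is Ding injective if there is a doubly infinite exact sequence
of injective modules, with `N` as one of the kernels, which stays exact after
applying `Hom(E, —)` for every FP-injective module `E`. -/
def DingInjective (S : Type) [Ring S] (N : ModuleCat.{0} S) : Prop :=
  ∃ (I : ℤ → ModuleCat.{0} S) (d : ∀ n : ℤ, I n →ₗ[S] I (n + 1)),
    (∀ n, Module.Injective S (I n)) ∧
    (∀ n, Function.Exact (d n) (d (n + 1))) ∧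
    Nonempty (N ≃ₗ[S] LinearMap.ker (d 0)) ∧
    (∀ E : ModuleCat.{0} S, FPInjective S E → ∀ n : ℤ,
      Function.Exact (fun g : E →ₗ[S] I n => (d n).comp g)
        (fun g : E →ₗ[S] I (n + 1) => (d (n + 1)).comp g))

/-- A right `R`-module `M` is Ding projective if there is a doubly infinite
exact sequence of projective right modules, with `M` as one of the kernels,
which stays exact after applying `Hom(—, F)` for every flat right module `F`. -/
def DingProjective (R : Type) [Ring R] (M : ModuleCat.{0} Rᵐᵒᵖ) : Prop :=
  ∃ (P : ℤ → ModuleCat.{0} Rᵐᵒᵖ) (d : ∀ n : ℤ, P n →ₗ[Rᵐᵒᵖ] P (n + 1)),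
    (∀ n, Module.Projective Rᵐᵒᵖ (P n)) ∧
    (∀ n, Function.Exact (d n) (d (n + 1))) ∧
    Nonempty (M ≃ₗ[Rᵐᵒᵖ] LinearMap.ker (d 0)) ∧
    (∀ F : ModuleCat.{0} Rᵐᵒᵖ, FlatRight R F → ∀ n : ℤ,
      Function.Exact (fun g : P (n + 1 + 1) →ₗ[Rᵐᵒᵖ] F => g.comp (d (n + 1)))
        (fun g : P (n + 1) →ₗ[Rᵐᵒᵖ] F => g.comp (d n)))

/-- A right `R`-module `M` is Ding flat if there is a doubly infinite exact
sequence of flat right modules, with `M` as one of the kernels, which stays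
exact after applying `— ⊗_R E` for every FP-injective left module `E`. -/
def DingFlat (R : Type) [Ring R] (M : ModuleCat.{0} Rᵐᵒᵖ) : Prop :=
  ∃ (F : ℤ → ModuleCat.{0} Rᵐᵒᵖ) (d : ∀ n : ℤ, F n →ₗ[Rᵐᵒᵖ] F (n + 1)),
    (∀ n, FlatRight R (F n)) ∧
    (∀ n, Function.Exact (d n) (d (n + 1))) ∧
    Nonempty (M ≃ₗ[Rᵐᵒᵖ] LinearMap.ker (d 0)) ∧
    (∀ E : ModuleCat.{0} R, FPInjective R E → ∀ n : ℤ,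
      Function.Exact (BTensor.rmap R (d n) E) (BTensor.rmap R (d (n + 1)) E))

/-- A left `R`-module `M` is Gorenstein flat if there is a doubly infinite
exact sequence of flat left modules, with `M` as one of the kernels, which
stays exact after applying `E ⊗_R —` for every injective right module `E`. -/
def GorensteinFlat (R : Type) [Ring R] (M : ModuleCat.{0} R) : Prop :=
  ∃ (F : ℤ → ModuleCat.{0} R) (d : ∀ n : ℤ, F n →ₗ[R] F (n + 1)),
    (∀ n, FlatLeft R (F n)) ∧
    (∀ n, Function.Exact (d n) (d (n + 1))) ∧
    Nonempty (M ≃ₗ[R] LinearMap.ker (d 0)) ∧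
    (∀ E : ModuleCat.{0} Rᵐᵒᵖ, Module.Injective Rᵐᵒᵖ E → ∀ n : ℤ,
      Function.Exact (BTensor.lmap R (d n) E) (BTensor.lmap R (d (n + 1)) E))

/-- A right `R`-module `M` has flat dimension `≤ n` : there is an exact
resolution `0 → F_n → ⋯ → F_0 → M → 0` by flat right modules (encoded as an
`ℕ`-indexed resolution which vanishes beyond degree `n`). -/
def flatDimLE (R : Type) [Ring R] (M : ModuleCat.{0} Rᵐᵒᵖ) (n : ℕ) : Prop :=
  ∃ (F : ℕ → ModuleCat.{0} Rᵐᵒᵖ) (d : ∀ k : ℕ, F (k + 1) →ₗ[Rᵐᵒᵖ] F k)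
    (ε : F 0 →ₗ[Rᵐᵒᵖ] M),
    (∀ k, FlatRight R (F k)) ∧
    Function.Surjective ε ∧
    Function.Exact (d 0) ε ∧
    (∀ k, Function.Exact (d (k + 1)) (d k)) ∧
    (∀ k, n < k → Subsingleton (F k))

/-- A right `R`-module has finite flat dimension. -/
def flatDimFinite (R : Type) [Ring R] (M : ModuleCat.{0} Rᵐᵒᵖ) : Prop :=
  ∃ n : ℕ, flatDimLE R M n

/-- A ring `R` is an `n`-FC ring if it is left and right coherent and has left
and right self FP-injective dimension equal to `n`. -/
def IsFCRing (R : Type) [Ring R] (n : ℕ) : Prop :=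
  LeftCoherent R ∧ RightCoherent R ∧
    fpInjDimEq R (ModuleCat.of R R) n ∧
    fpInjDimEq Rᵐᵒᵖ (ModuleCat.of Rᵐᵒᵖ Rᵐᵒᵖ) n

/-- A ring is Ding-Chen if it is an `n`-FC ring for some `n`. -/
def IsDingChen (R : Type) [Ring R] : Prop :=
  ∃ n : ℕ, IsFCRing R n

end

/-!
Injective modules are FP-injective, and Ding injective via the split complex
`⋯ → N × N → N × N → ⋯`, `(x, y) ↦ (y, 0)`. If `N` is Ding injective with complex `I`, every map
from an FP-injective module to `N = ker (I⁰ → I¹)` lifts along `I⁻¹ → N`; lifting the summands of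
`N = ⨁ Eₙ` with all `Eₙ` injective makes `N` a retract of `I⁻¹`, hence injective. Noetherianity
then follows as in the Bass–Papp theorem: for a chain of right ideals `Iₙ` with union `J`, the map
`J → ⨁ E(R/Iₙ)`, `x ↦ (x mod Iₙ)ₙ`, extends to `R`, and the finitely many nonzero coordinates of
the image of `1` force `J ⊆ Iₙ` for large `n`.
-/

universe v

section ExtInjective

variable {R C : Type*} [Ring R] [Category* C] [Abelian C] [Linear R C] [EnoughProjectives C]

lemma isZero_Ext_succ_of_injective (X Y : C) [Injective Y] (n : ℕ) :
    Limits.IsZero (((Ext R C (n + 1)).obj (op X)).obj Y) := by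
  let P := projectiveResolution X
  refine Limits.IsZero.of_iso ?_ (P.isoExt (n + 1) Y)
  rw [← HomologicalComplex.exactAt_iff_isZero_homology,
    HomologicalComplex.exactAt_iff' _ n (n + 1) (n + 2) (by simp) (by simp),
    ShortComplex.moduleCat_exact_iff]
  intro φ hφ
  exact ⟨(P.exact_succ n).descToInjective φ hφ, (P.exact_succ n).comp_descToInjective φ hφ⟩

end ExtInjective

lemma fpInjective_of_injective {S : Type} [Ring S] (E : ModuleCat.{0} S) [Module.Injective S E] :
    FPInjective S E := fun F _ =>
  have : Injective E := Module.injective_object_of_injective_module S E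
  ModuleCat.subsingleton_of_isZero (isZero_Ext_succ_of_injective (R := ℤ) F E 0)

instance Module.Injective.prod {S : Type*} [Ring S] {M N : Type v} [AddCommGroup M] [Module S M]
    [AddCommGroup N] [Module S N] [Module.Injective S M] [Module.Injective S N] :
    Module.Injective S (M × N) where
  out _ _ _ _ _ _ f hf g := by
    obtain ⟨g₁, hg₁⟩ := Module.Injective.out f hf (LinearMap.fst S M N ∘ₗ g)
    obtain ⟨g₂, hg₂⟩ := Module.Injective.out f hf (LinearMap.snd S M N ∘ₗ g)
    exact ⟨g₁.prod g₂, fun x => Prod.ext (hg₁ x) (hg₂ x)⟩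

lemma Module.Injective.of_leftInverse {S : Type*} {I M : Type v} [Ring S] [AddCommGroup I]
    [Module S I] [AddCommGroup M] [Module S M] [Module.Injective S I]
    (p : I →ₗ[S] M) (s : M →ₗ[S] I) (h : p ∘ₗ s = LinearMap.id) : Module.Injective S M where
  out _ _ _ _ _ _ f hf g := by
    obtain ⟨g', hg'⟩ := Module.Injective.out f hf (s ∘ₗ g)
    exact ⟨p ∘ₗ g', fun x => by simp [hg', ← LinearMap.comp_apply p s, h]⟩

section BassPapp

open DirectSum Filter

variable {S : Type*} [Ring S] {ι : Type*} {M : ι → Type*} [∀ i, AddCommGroup (M i)]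
  [∀ i, Module S (M i)]

lemma DirectSum.exists_linearMap_apply_eq {N : Type*} [AddCommGroup N] [Module S N]
    (u : ∀ i, N →ₗ[S] M i) (hu : ∀ x, ∀ᶠ i in cofinite, u i x = 0) :
    ∃ ψ : N →ₗ[S] ⨁ i, M i, ∀ x i, ψ x i = u i x := by
  classical
  let φ : N → ⨁ i, M i := fun x =>
    DFinsupp.mk (eventually_cofinite.1 (hu x)).toFinset fun i => u i x
  have hφ : ∀ x i, φ x i = u i x := by
    intro x i
    simp only [φ, DFinsupp.mk_apply]
    split_ifs with hi
    · rfl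
    · simpa [eq_comm] using hi
  refine ⟨{ toFun := φ, map_add' := fun x y => ?_, map_smul' := fun c x => ?_ }, hφ⟩
  · ext i
    simp only [DirectSum.add_apply, hφ, map_add]
  · ext i
    simp only [DirectSum.smul_apply, hφ, map_smul, RingHom.id_apply]

lemma Module.Baer.eventually_eq_zero_of_directSum (hM : Module.Baer S (⨁ i, M i))
    {J : Ideal S} (u : ∀ i, J →ₗ[S] M i) (hu : ∀ x, ∀ᶠ i in cofinite, u i x = 0) :
    ∀ᶠ i in cofinite, u i = 0 := by
  classical
  obtain ⟨ψ, hψ⟩ := DirectSum.exists_linearMap_apply_eq u hu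
  obtain ⟨Ψ, hΨ⟩ := hM J ψ
  refine eventually_cofinite.2 ((Ψ 1).support.finite_toSet.subset fun i (hi : u i ≠ 0) => ?_)
  rw [Finset.mem_coe, DFinsupp.mem_support_iff]
  contrapose! hi
  refine LinearMap.ext fun x => ?_
  have hx : Ψ x = (x : S) • Ψ 1 := (congrArg Ψ (mul_one (x : S)).symm).trans (Ψ.map_smul _ 1)
  rw [← hψ, ← hΨ x x.2, hx, DirectSum.smul_apply, hi, smul_zero, LinearMap.zero_apply]

end BassPapp

open DirectSum Filter in
theorem isNoetherianRing_of_injective_directSum {S : Type v} [Ring S]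
    (h : ∀ M : ℕ → ModuleCat.{v} S, (∀ n, Module.Injective S (M n)) →
      Module.Injective S (⨁ n, M n)) :
    IsNoetherianRing S := by
  rw [isNoetherianRing_iff, ← monotone_stabilizes_iff_noetherian]
  intro f
  let M n := Injective.under (ModuleCat.of S (S ⧸ f n))
  have hM n : Module.Injective S (M n) :=
    Module.injective_module_of_injective_object S (M n)
      (inj := inferInstanceAs (Injective (Injective.under _)))
  let J := ⨆ n, f n
  let ι n : ModuleCat.of S (S ⧸ f n) ⟶ M n := Injective.ι _
  let u n : J →ₗ[S] M n := (ι n).hom ∘ₗ (f n).mkQ ∘ₗ J.subtype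
  have hu n (x : J) : u n x = 0 ↔ (x : S) ∈ f n := by
    have hι := (ModuleCat.mono_iff_injective (ι n)).1 inferInstance
    rw [← Submodule.Quotient.mk_eq_zero, ← map_eq_zero_iff _ hι]
    rfl
  have hJ : ∀ᶠ n in cofinite, u n = 0 := by
    refine (Module.Baer.of_injective (h M hM)).eventually_eq_zero_of_directSum u fun x => ?_
    obtain ⟨m, hm⟩ := (Submodule.mem_iSup_of_directed f f.monotone.directed_le).1 x.2
    rw [Nat.cofinite_eq_atTop, eventually_atTop]
    exact ⟨m, fun n hn => (hu n x).2 (f.monotone hn hm)⟩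
  obtain ⟨N, hN⟩ := hJ.exists
  refine ⟨N, fun m hm => le_antisymm (f.monotone hm) ((le_iSup f m).trans fun x hx => ?_)⟩
  exact (hu N ⟨x, hx⟩).1 (by rw [hN]; rfl)

section DingInjective

variable {S : Type} [Ring S]

open DirectSum

lemma dingInjective_of_injective (N : ModuleCat.{0} S) [Module.Injective S N] :
    DingInjective S N := by
  let d : N × N →ₗ[S] N × N := LinearMap.inl S N N ∘ₗ LinearMap.snd S N N
  have hker : LinearMap.ker d = LinearMap.range (LinearMap.inl S N N) := by
    rw [LinearMap.ker_comp_of_ker_eq_bot _ (LinearMap.ker_eq_bot.2 LinearMap.inl_injective),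
      LinearMap.ker_snd]
  have hrange : LinearMap.range d = LinearMap.range (LinearMap.inl S N N) :=
    LinearMap.range_comp_of_range_eq_top _ (LinearMap.range_eq_top.2 LinearMap.snd_surjective)
  refine ⟨fun _ => ModuleCat.of S (N × N), fun _ => d, fun _ => inferInstance,
    fun _ => LinearMap.exact_iff.2 (hker.trans hrange.symm),
    ⟨(LinearEquiv.ofInjective _ LinearMap.inl_injective).trans (LinearEquiv.ofEq _ _ hker.symm)⟩,
    fun E _ _ G => ⟨fun hG => ⟨LinearMap.inr S N N ∘ₗ LinearMap.fst S N N ∘ₗ G, ?_⟩, ?_⟩⟩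
  · ext x
    · rfl
    · exact (congrArg Prod.fst (LinearMap.congr_fun hG x)).symm
  · rintro ⟨H, rfl⟩
    ext x <;> rfl

lemma DingInjective.exists_lift {N : ModuleCat.{0} S} (hN : DingInjective S N) :
    ∃ (I : ModuleCat.{0} S) (p : I →ₗ[S] N), Module.Injective S I ∧
      ∀ E : ModuleCat.{0} S, FPInjective S E → ∀ f : E →ₗ[S] N, ∃ g : E →ₗ[S] I, p ∘ₗ g = f := by
  obtain ⟨I, d, hI, hexact, ⟨e⟩, hHom⟩ := hN
  have hd : ∀ x, d (-1) x ∈ LinearMap.ker (d 0) := fun x =>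
    (hexact (-1) (d (-1) x)).2 ⟨x, rfl⟩
  refine ⟨I (-1), e.symm.toLinearMap ∘ₗ (d (-1)).codRestrict _ hd, hI (-1), fun E hE f => ?_⟩
  let j : E →ₗ[S] I (-1 + 1) := (LinearMap.ker (d 0)).subtype ∘ₗ e.toLinearMap ∘ₗ f
  obtain ⟨g, hg⟩ := (hHom E hE (-1) j).1 (LinearMap.ext fun x => (e (f x)).2)
  refine ⟨g, LinearMap.ext fun x => e.symm_apply_eq.2 (Subtype.ext ?_)⟩
  exact LinearMap.congr_fun hg x

lemma injective_directSum_of_dingInjective {ι : Type} (M : ι → ModuleCat.{0} S)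
    (hM : ∀ i, FPInjective S (M i)) (hD : DingInjective S (ModuleCat.of S (⨁ i, M i))) :
    Module.Injective S (⨁ i, M i) := by
  classical
  obtain ⟨I, p, hI, hlift⟩ := hD.exists_lift
  choose g hg using fun i => hlift (M i) (hM i) (DirectSum.lof S ι (fun i => M i) i)
  refine Module.Injective.of_leftInverse p (DirectSum.toModule S ι I g) ?_
  refine DirectSum.linearMap_ext S fun i => ?_
  refine LinearMap.ext fun x => ?_
  simpa only [LinearMap.comp_apply, DirectSum.toModule_lof, LinearMap.id_apply]
    using LinearMap.congr_fun (hg i) x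

end DingInjective

open DirectSum in
/-- If the Ding injective right `R`-modules are closed under
arbitrary direct sums, then `R` is right Noetherian. -/
theorem statement4 (R : Type) [Ring R]
    (h : ∀ (ι : Type) (M : ι → ModuleCat.{0} Rᵐᵒᵖ),
      (∀ i, DingInjective Rᵐᵒᵖ (M i)) →
      DingInjective Rᵐᵒᵖ (ModuleCat.of Rᵐᵒᵖ (⨁ i, M i))) :
    IsNoetherianRing Rᵐᵒᵖ :=
  isNoetherianRing_of_injective_directSum fun M _ =>
    injective_directSum_of_dingInjective M (fun n => fpInjective_of_injective (M n))
      (h ℕ M fun n => dingInjective_of_injective (M n))
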